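/- Let $K$ be a field and $G(Y) = \sum_{i \geq \lambda} \alpha_i Y^i \in K[[Y]]$ with $\lambda \geq 2$ and $\alpha_\lambda \neq 0$. Then the system of equations obtained by equating homogeneous components in $\sum_{i+j \geq \lambda} \beta_{ij} X^{i+j-\lambda} Y^j = \big(\sum_{i,j \geq 0} \gamma_{ij} X^i Y^j\big)\big(X + \sum_{i \geq \lambda} \alpha_i Y^i\big)$ has a solution with $\gamma_{00} = 1$ (so $u = \sum \gamma_{ij}X^iY^j$ is a unit), and any such solution satisfies $\beta_{0\lambda} = \gamma_{00} \alpha_\lambda \neq 0$ and $\beta_{\lambda - j, j} = 0$ for $1 \leq j \leq \lambda - 1$ while $\beta_{\lambda,0} = 0$. -/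

import Mathlib

/-- The series `∑_{i+j ≥ λ} β_{ij} X^{i+j-λ} Y^j` (the image of `H = ∑ β_{ij}X^iY^j`
under `Y ↦ XY` divided by `X^λ`): its coefficient at `X^p Y^j` is `β_{p+λ-j, j}`. -/
noncomputable def lhsSeries {K : Type*} [Field K] (lam : ℕ) (β : ℕ → ℕ → K) :
    MvPowerSeries (Fin 2) K :=
  fun m => if m 1 ≤ m 0 + lam then β (m 0 + lam - m 1) (m 1) else 0

/-- The series `∑ γ_{ij} X^i Y^j`. -/
noncomputable def gammaSeries {K : Type*} [Field K] (γ : ℕ → ℕ → K) :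
    MvPowerSeries (Fin 2) K :=
  fun m => γ (m 0) (m 1)

/-- The series `G(Y) = ∑_{i} α_i Y^i` regarded in `K[[X,Y]]`. -/
noncomputable def alphaSeries {K : Type*} [Field K] (α : ℕ → K) :
    MvPowerSeries (Fin 2) K :=
  fun m => if m 0 = 0 then α (m 1) else 0

section Aux

noncomputable def expPair (a b : ℕ) : Fin 2 →₀ ℕ := Finsupp.single 0 a + Finsupp.single 1 b

@[simp] lemma expPair_apply_zero (a b : ℕ) : expPair a b 0 = a := by
  simp [expPair, Finsupp.single_apply]

@[simp] lemma expPair_apply_one (a b : ℕ) : expPair a b 1 = b := by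
  simp [expPair, Finsupp.single_apply]

lemma expPair_eq (m : Fin 2 →₀ ℕ) : expPair (m 0) (m 1) = m := by
  ext i
  fin_cases i
  · simp
  · simp

variable {K : Type*} [Field K]

lemma coeff_mul_alphaSeries (f : MvPowerSeries (Fin 2) K) (α : ℕ → K) (m : Fin 2 →₀ ℕ) :
    MvPowerSeries.coeff m (f * alphaSeries α)
      = ∑ k ∈ Finset.range (m 1 + 1),
          MvPowerSeries.coeff (expPair (m 0) (m 1 - k)) f * α k := by
  classical
  rw [MvPowerSeries.coeff_mul]
  have hsub : (Finset.range (m 1 + 1)).image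
      (fun k => (expPair (m 0) (m 1 - k), Finsupp.single 1 k)) ⊆ Finset.HasAntidiagonal.antidiagonal m := by
    intro p hp
    simp only [Finset.mem_image, Finset.mem_range] at hp
    obtain ⟨k, hk, rfl⟩ := hp
    rw [Finset.HasAntidiagonal.mem_antidiagonal]
    ext i
    fin_cases i
    · simp [Finsupp.single_apply]
    · simp [Finsupp.single_apply]
      omega
  have hzero : ∀ p ∈ Finset.HasAntidiagonal.antidiagonal m,
      p ∉ (Finset.range (m 1 + 1)).image
        (fun k => (expPair (m 0) (m 1 - k), Finsupp.single 1 k)) →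
      MvPowerSeries.coeff p.1 f * MvPowerSeries.coeff p.2 (alphaSeries α) = 0 := by
    intro p hp hnp
    rw [Finset.HasAntidiagonal.mem_antidiagonal] at hp
    by_cases h0 : p.2 0 = 0
    · exfalso
      apply hnp
      have h1 : p.1 0 = m 0 := by
        have := DFunLike.congr_fun hp 0
        simp only [Finsupp.add_apply] at this
        omega
      have h2 : p.1 1 + p.2 1 = m 1 := by
        have := DFunLike.congr_fun hp 1
        simpa [Finsupp.add_apply] using this
      simp only [Finset.mem_image, Finset.mem_range]
      refine ⟨p.2 1, by omega, ?_⟩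
      have e1 : expPair (m 0) (m 1 - p.2 1) = p.1 := by
        ext i
        fin_cases i
        · simpa using h1.symm
        · simp; omega
      have e2 : Finsupp.single 1 (p.2 1) = p.2 := by
        ext i
        fin_cases i
        · simpa [Finsupp.single_apply] using h0.symm
        · simp
      rw [e1, e2]
    · have : MvPowerSeries.coeff p.2 (alphaSeries α) = 0 := by
        simp [MvPowerSeries.coeff_apply, alphaSeries, h0]
      rw [this, mul_zero]
  have hinj : ∀ a ∈ Finset.range (m 1 + 1), ∀ b ∈ Finset.range (m 1 + 1),
      (fun k => (expPair (m 0) (m 1 - k), Finsupp.single (1 : Fin 2) k)) a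
        = (fun k => (expPair (m 0) (m 1 - k), Finsupp.single (1 : Fin 2) k)) b → a = b := by
    intro a _ b _ hab
    have := congrArg (fun p : (Fin 2 →₀ ℕ) × (Fin 2 →₀ ℕ) => p.2 1) hab
    simpa using this
  rw [← Finset.sum_subset hsub hzero, Finset.sum_image hinj]
  apply Finset.sum_congr rfl
  intro k _
  congr 1
  simp [MvPowerSeries.coeff_apply, alphaSeries, Finsupp.single_apply]

lemma coeff_mul_X0 (f : MvPowerSeries (Fin 2) K) (m : Fin 2 →₀ ℕ) :
    MvPowerSeries.coeff m (f * MvPowerSeries.X 0)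
      = if 1 ≤ m 0 then MvPowerSeries.coeff (expPair (m 0 - 1) (m 1)) f else 0 := by
  rw [show (MvPowerSeries.X 0 : MvPowerSeries (Fin 2) K)
      = MvPowerSeries.monomial (Finsupp.single 0 1) 1 from rfl,
    MvPowerSeries.coeff_mul_monomial]
  have hc : Finsupp.single (0 : Fin 2) 1 ≤ m ↔ 1 ≤ m 0 := by
    rw [Finsupp.single_le_iff]
  by_cases h : 1 ≤ m 0
  · have hm : m - Finsupp.single (0 : Fin 2) 1 = expPair (m 0 - 1) (m 1) := by
      ext i
      fin_cases i
      · simp [Finsupp.single_apply]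
      · simp [Finsupp.single_apply]
    rw [if_pos (hc.mpr h), if_pos h, mul_one, hm]
  · rw [if_neg (fun hh => h (hc.mp hh)), if_neg h]

lemma coeff_prod (γ : ℕ → ℕ → K) (α : ℕ → K) (m : Fin 2 →₀ ℕ) :
    MvPowerSeries.coeff m
        (gammaSeries γ * ((MvPowerSeries.X 0 : MvPowerSeries (Fin 2) K) + alphaSeries α))
      = (if 1 ≤ m 0 then γ (m 0 - 1) (m 1) else 0)
        + ∑ k ∈ Finset.range (m 1 + 1), γ (m 0) (m 1 - k) * α k := by
  rw [mul_add, map_add, coeff_mul_X0, coeff_mul_alphaSeries]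
  congr 1
  · split <;> simp [MvPowerSeries.coeff_apply, gammaSeries]
  · apply Finset.sum_congr rfl
    intro k _
    simp [MvPowerSeries.coeff_apply, gammaSeries]

lemma sum_eq_coeff_mul (g : PowerSeries K) (α : ℕ → K) (n : ℕ) :
    ∑ k ∈ Finset.range (n + 1), PowerSeries.coeff (n - k) g * α k
      = PowerSeries.coeff n (PowerSeries.mk α * g) := by
  rw [PowerSeries.coeff_mul,
    Finset.Nat.sum_antidiagonal_eq_sum_range_succ
      (fun i j => PowerSeries.coeff i (PowerSeries.mk α) * PowerSeries.coeff j g) n]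
  apply Finset.sum_congr rfl
  intro k _
  rw [PowerSeries.coeff_mk, mul_comm]

/-- The recursively-defined coefficient series of the unit `u`. -/
noncomputable def gammaFun (lam : ℕ) (α : ℕ → K) : ℕ → PowerSeries K
  | 0 => PowerSeries.C (α lam) * (PowerSeries.mk fun n => α (n + lam))⁻¹
  | (p+1) => -(PowerSeries.mk fun n =>
        PowerSeries.coeff (n + lam) (gammaFun lam α p)) *
      (PowerSeries.mk fun n => α (n + lam))⁻¹

end Aux

/-- Let `G(Y) = ∑_{i ≥ λ} α_i Y^i` with `λ ≥ 2` and `α_λ ≠ 0`.  The system of equations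
obtained by equating homogeneous components in
`∑_{i+j≥λ} β_{ij} X^{i+j-λ} Y^j = (∑ γ_{ij} X^iY^j)(X + ∑_{i≥λ} α_i Y^i)`
has a solution with `γ_{00} = 1` (so `u = ∑ γ_{ij}X^iY^j` is a unit), and any solution
with `γ_{00} ≠ 0` satisfies `β_{0λ} = γ_{00} α_λ ≠ 0`, `β_{λ-j,j} = 0` for
`1 ≤ j ≤ λ-1`, and `β_{λ,0} = 0`. -/
theorem coefficient_system_solvable {K : Type*} [Field K] (lam : ℕ) (hlam : 2 ≤ lam)
    (α : ℕ → K) (hαlam : α lam ≠ 0) (hαlow : ∀ i, i < lam → α i = 0) :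
    (∃ β γ : ℕ → ℕ → K, γ 0 0 = 1 ∧
      lhsSeries lam β =
        gammaSeries γ * ((MvPowerSeries.X 0 : MvPowerSeries (Fin 2) K) + alphaSeries α)) ∧
    (∀ β γ : ℕ → ℕ → K,
      lhsSeries lam β =
        gammaSeries γ * ((MvPowerSeries.X 0 : MvPowerSeries (Fin 2) K) + alphaSeries α) →
      γ 0 0 ≠ 0 →
        β 0 lam = γ 0 0 * α lam ∧ β 0 lam ≠ 0 ∧
        (∀ j, 1 ≤ j → j ≤ lam - 1 → β (lam - j) j = 0) ∧ β lam 0 = 0) := by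
  constructor
  · -- existence
    set g0 : PowerSeries K := PowerSeries.mk fun n => α (n + lam) with hg0def
    have hg0 : PowerSeries.constantCoeff g0 ≠ 0 := by
      simpa [hg0def] using hαlam
    have hunit : g0 * g0⁻¹ = 1 := PowerSeries.mul_inv_cancel _ hg0
    have hG : (PowerSeries.mk α : PowerSeries K) = PowerSeries.X ^ lam * g0 := by
      ext n
      rw [PowerSeries.coeff_X_pow_mul']
      split_ifs with h
      · rw [PowerSeries.coeff_mk, hg0def, PowerSeries.coeff_mk]
        congr 1
        omega
      · rw [PowerSeries.coeff_mk]
        exact hαlow n (by omega)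
    set γf : ℕ → PowerSeries K := gammaFun lam α with hγf
    have key0 : PowerSeries.mk α * γf 0
        = PowerSeries.C (α lam) * PowerSeries.X ^ lam := by
      rw [hγf, gammaFun, ← hg0def, hG,
        show PowerSeries.X ^ lam * g0 * (PowerSeries.C (α lam) * g0⁻¹)
          = PowerSeries.C (α lam) * PowerSeries.X ^ lam * (g0 * g0⁻¹) by ring,
        hunit, mul_one]
    have keyS : ∀ p n, lam ≤ n →
        PowerSeries.coeff n (PowerSeries.mk α * γf (p + 1))
          = -PowerSeries.coeff n (γf p) := by
      intro p n hn
      have h1 : PowerSeries.mk α * γf (p + 1)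
          = -(PowerSeries.X ^ lam *
              PowerSeries.mk fun n => PowerSeries.coeff (n + lam) (γf p)) := by
        rw [hγf, gammaFun, ← hγf, ← hg0def, hG,
          show PowerSeries.X ^ lam * g0 *
              (-(PowerSeries.mk fun n => PowerSeries.coeff (n + lam) (γf p)) * g0⁻¹)
            = -(PowerSeries.X ^ lam *
                PowerSeries.mk fun n => PowerSeries.coeff (n + lam) (γf p)) * (g0 * g0⁻¹)
            by ring, hunit, mul_one]
      rw [h1, map_neg, PowerSeries.coeff_X_pow_mul', if_pos hn, PowerSeries.coeff_mk,
        tsub_add_cancel_of_le hn]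
    set γ : ℕ → ℕ → K := fun p j => PowerSeries.coeff j (γf p) with hγ
    set P : MvPowerSeries (Fin 2) K :=
      gammaSeries γ * ((MvPowerSeries.X 0 : MvPowerSeries (Fin 2) K) + alphaSeries α) with hP
    set β : ℕ → ℕ → K := fun a b =>
      if lam ≤ a + b then MvPowerSeries.coeff (expPair (a + b - lam) b) P else 0 with hβ
    refine ⟨β, γ, ?_, ?_⟩
    · rw [hγ]
      simp only [hγf, gammaFun]
      rw [PowerSeries.coeff_zero_eq_constantCoeff, map_mul, PowerSeries.constantCoeff_C,
        PowerSeries.constantCoeff_inv]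
      simp only [PowerSeries.constantCoeff_mk, zero_add]
      exact mul_inv_cancel₀ hαlam
    · funext m
      rw [show (gammaSeries γ * ((MvPowerSeries.X 0 : MvPowerSeries (Fin 2) K) + alphaSeries α)) m
        = MvPowerSeries.coeff m P from rfl]
      show (if m 1 ≤ m 0 + lam then β (m 0 + lam - m 1) (m 1) else 0) = _
      by_cases hm : m 1 ≤ m 0 + lam
      · rw [if_pos hm, hβ]
        simp only
        rw [if_pos (by omega), show m 0 + lam - m 1 + m 1 - lam = m 0 by omega, expPair_eq]
      · rw [if_neg hm]
        rw [hP, coeff_prod]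
        have hsum : ∑ k ∈ Finset.range (m 1 + 1), γ (m 0) (m 1 - k) * α k
            = PowerSeries.coeff (m 1) (PowerSeries.mk α * γf (m 0)) := by
          rw [hγ, sum_eq_coeff_mul]
        rw [hsum]
        rcases Nat.eq_zero_or_pos (m 0) with h0 | h0
        · rw [h0, if_neg (by omega), key0, zero_add,
            PowerSeries.coeff_C_mul, PowerSeries.coeff_X_pow, if_neg (by omega), mul_zero]
        · obtain ⟨q, hq⟩ : ∃ q, m 0 = q + 1 := ⟨m 0 - 1, by omega⟩
          rw [hq, if_pos (by omega), keyS q (m 1) (by omega)]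
          simp only [hγ, Nat.add_sub_cancel]
          exact (add_neg_cancel _).symm
  · -- consequences
    intro β γ heq hγ00
    have E : ∀ j, j ≤ lam → β (lam - j) j
        = ∑ k ∈ Finset.range (j + 1), γ 0 (j - k) * α k := by
      intro j hj
      have h := congrFun heq (expPair 0 j)
      rw [show (gammaSeries γ * ((MvPowerSeries.X 0 : MvPowerSeries (Fin 2) K) + alphaSeries α))
            (expPair 0 j)
          = MvPowerSeries.coeff (expPair 0 j)
              (gammaSeries γ * ((MvPowerSeries.X 0 : MvPowerSeries (Fin 2) K) + alphaSeries α))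
          from rfl, coeff_prod] at h
      simp only [expPair_apply_zero, expPair_apply_one] at h
      rw [show lhsSeries lam β (expPair 0 j)
          = if (expPair 0 j) 1 ≤ (expPair 0 j) 0 + lam
            then β ((expPair 0 j) 0 + lam - (expPair 0 j) 1) ((expPair 0 j) 1) else 0
          from rfl] at h
      simp only [expPair_apply_zero, expPair_apply_one, zero_add] at h
      rw [if_pos hj, if_neg (by omega), zero_add] at h
      exact h
    have h0lam : β 0 lam = γ 0 0 * α lam := by
      have h := E lam le_rfl
      rw [Nat.sub_self] at h
      rw [h, Finset.sum_eq_single_of_mem lam (Finset.self_mem_range_succ lam)]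
      · rw [Nat.sub_self]
      · intro k hk hkne
        rw [Finset.mem_range] at hk
        rw [hαlow k (by omega), mul_zero]
    refine ⟨h0lam, ?_, ?_, ?_⟩
    · rw [h0lam]
      exact mul_ne_zero hγ00 hαlam
    · intro j hj1 hj2
      rw [E j (by omega)]
      apply Finset.sum_eq_zero
      intro k hk
      rw [Finset.mem_range] at hk
      rw [hαlow k (by omega), mul_zero]
    · have h := E 0 (by omega)
      rw [Nat.sub_zero] at h
      rw [h]
      simp [hαlow 0 (by omega)]
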